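/- Define w : ℝ → ℝ by w(r) = (1/7)(3r⁶ − 24r⁵ + 70r⁴ − 112r³ + 105r² − 56r + 14), and define the vector field v : ℝ² → ℝ² by v(x) = w(|x|) · x. Then for every x ∈ ℝ² with x ≠ 0, v is differentiable at x and its divergence satisfies div v (x) = 4(1 − |x|)⁶ − (4/7)|x|⁶. -/

import Mathlib

/-- Radial profile of the exact Darcy velocity: `u(r) = r · w(r)`. -/
noncomputable def radialProfile (r : ℝ) : ℝ :=
  (1 / 7) * (3 * r ^ 6 - 24 * r ^ 5 + 70 * r ^ 4 - 112 * r ^ 3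
    + 105 * r ^ 2 - 56 * r + 14)

/-- The exact Darcy velocity field `v(x) = w(|x|) x` on the plane. -/
noncomputable def darcyField (x : EuclideanSpace ℝ (Fin 2)) :
    EuclideanSpace ℝ (Fin 2) :=
  radialProfile ‖x‖ • x

/-!
For a radial field `v(x) = f(‖x‖) x` on `ℝⁿ`, away from the origin
`Dv(x) = f(‖x‖) I + (f'(‖x‖) / ‖x‖) x ⊗ x`, whose trace is `n f(‖x‖) + ‖x‖ f'(‖x‖)`.
With `n = 2` and `f = w`, the claim reduces to the polynomial identity
`2 w(r) + r w'(r) = 4 (1 - r)⁶ - (4/7) r⁶`.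
-/

open ContinuousLinearMap

section Radial

variable {E : Type*} [NormedAddCommGroup E] [InnerProductSpace ℝ E] {x : E}

theorem hasFDerivAt_norm_of_ne_zero (hx : x ≠ 0) :
    HasFDerivAt (fun y : E => ‖y‖) (‖x‖⁻¹ • innerSL ℝ x) x := by
  have hsqrt := (hasStrictFDerivAt_norm_sq x).hasFDerivAt.sqrt (by positivity)
  simp only [Real.sqrt_sq (norm_nonneg _)] at hsqrt
  convert hsqrt using 1
  ext y
  simp only [smul_apply, smul_eq_mul, nsmul_eq_mul]
  field_simp
  ring

theorem hasFDerivAt_radialField {f : ℝ → ℝ} {f' : ℝ} (hf : HasDerivAt f f' ‖x‖) (hx : x ≠ 0) :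
    HasFDerivAt (fun y : E => f ‖y‖ • y)
      (f ‖x‖ • ContinuousLinearMap.id ℝ E + (f' * ‖x‖⁻¹) • (innerSL ℝ x).smulRight x) x := by
  convert (hf.comp_hasFDerivAt x (hasFDerivAt_norm_of_ne_zero hx)).smul (hasFDerivAt_id x) using 1
  congr 1
  ext y
  simp [smul_smul]

end Radial

section Divergence

variable {ι : Type*} [Fintype ι] [DecidableEq ι]

noncomputable def divergence (v : EuclideanSpace ℝ ι → EuclideanSpace ℝ ι)
    (x : EuclideanSpace ℝ ι) : ℝ :=
  ∑ i, fderiv ℝ v x (EuclideanSpace.single i 1) i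

theorem sum_single_apply_self :
    ∑ i : ι, (EuclideanSpace.single i (1 : ℝ) : EuclideanSpace ℝ ι) i = Fintype.card ι := by
  simp

theorem sum_smulRight_innerSL_single_apply (x : EuclideanSpace ℝ ι) :
    ∑ i, ((innerSL ℝ x).smulRight x) (EuclideanSpace.single i 1) i = ‖x‖ ^ 2 := by
  rw [EuclideanSpace.norm_sq_eq]
  simp [EuclideanSpace.inner_single_right, sq]

theorem divergence_radialField {f : ℝ → ℝ} {f' : ℝ} {x : EuclideanSpace ℝ ι}
    (hf : HasDerivAt f f' ‖x‖) (hx : x ≠ 0) :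
    divergence (fun y => f ‖y‖ • y) x = Fintype.card ι * f ‖x‖ + ‖x‖ * f' := by
  have hx' : ‖x‖ ≠ 0 := norm_ne_zero_iff.2 hx
  simp only [divergence, (hasFDerivAt_radialField hf hx).fderiv, add_apply, smul_apply, id_apply,
    PiLp.add_apply, PiLp.smul_apply, smul_eq_mul, Finset.sum_add_distrib, ← Finset.mul_sum,
    sum_single_apply_self, sum_smulRight_innerSL_single_apply]
  field_simp

end Divergence

theorem hasDerivAt_radialProfile (r : ℝ) :
    HasDerivAt radialProfile
      ((1 / 7) * (18 * r ^ 5 - 120 * r ^ 4 + 280 * r ^ 3 - 336 * r ^ 2 + 210 * r - 56)) r :=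
  ((((((((hasDerivAt_pow 6 r).const_mul 3).sub ((hasDerivAt_pow 5 r).const_mul 24)).add
    ((hasDerivAt_pow 4 r).const_mul 70)).sub ((hasDerivAt_pow 3 r).const_mul 112)).add
    ((hasDerivAt_pow 2 r).const_mul 105)).sub ((hasDerivAt_id r).const_mul 56)).add_const 14
    |>.const_mul (1 / 7)).congr_deriv (by norm_num; ring)

/-- Away from the origin, the radial field `v(x) = w(|x|) x` is differentiable
and satisfies the incompressibility equation
`div v(x) = 4(1 − |x|)⁶ − (4/7)|x|⁶`. -/
theorem darcyField_div (x : EuclideanSpace ℝ (Fin 2)) (hx : x ≠ 0) :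
    DifferentiableAt ℝ darcyField x ∧
      (∑ i : Fin 2, fderiv ℝ darcyField x (EuclideanSpace.single i 1) i)
        = 4 * (1 - ‖x‖) ^ 6 - (4 / 7) * ‖x‖ ^ 6 := by
  have hw := hasDerivAt_radialProfile ‖x‖
  refine ⟨(hasFDerivAt_radialField hw hx).differentiableAt, ?_⟩
  change divergence (fun y => radialProfile ‖y‖ • y) x = _
  rw [divergence_radialField hw hx, radialProfile]
  simp only [Fintype.card_fin]
  ring
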